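/- For a cartesian category S with weak pullbacks, the weak-subobjects doctrine Ψ : S^op → InfSL has weak full comprehensions and satisfies the rule of choice: for every α ∈ Ψ(A×B) with ⊤_A ≤ ∃_{pr1}(α) there exists an arrow w : A → B of S with ⊤_A ≤ Ψ_{⟨id_A,w⟩}(α). Consequently the functor L : Q_Ψ → E_Ψ is full (and an equivalence). -/

import Mathlib

open CategoryTheory CategoryTheory.Limits

universe u v

/-- A choice of weak pullbacks: for every cospan a weakly universal cone. -/
structure WeakPullbacks (S : Type u) [Category.{v} S] where
  obj : ∀ {X Y Z : S}, (X ⟶ Z) → (Y ⟶ Z) → S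
  fst : ∀ {X Y Z : S} (f : X ⟶ Z) (g : Y ⟶ Z), obj f g ⟶ X
  snd : ∀ {X Y Z : S} (f : X ⟶ Z) (g : Y ⟶ Z), obj f g ⟶ Y
  comm : ∀ {X Y Z : S} (f : X ⟶ Z) (g : Y ⟶ Z), fst f g ≫ f = snd f g ≫ g
  lift : ∀ {X Y Z V : S} {f : X ⟶ Z} {g : Y ⟶ Z} (a : V ⟶ X) (b : V ⟶ Y),
    a ≫ f = b ≫ g → (V ⟶ obj f g)
  lift_fst : ∀ {X Y Z V : S} {f : X ⟶ Z} {g : Y ⟶ Z} (a : V ⟶ X) (b : V ⟶ Y)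
    (h : a ≫ f = b ≫ g), lift a b h ≫ fst f g = a
  lift_snd : ∀ {X Y Z V : S} {f : X ⟶ Z} {g : Y ⟶ Z} (a : V ⟶ X) (b : V ⟶ Y)
    (h : a ≫ f = b ≫ g), lift a b h ≫ snd f g = b

variable {S : Type u} [Category.{v} S]

/-- Representatives of weak subobjects of `A`: arrows into `A`. The fibre
`Ψ(A)` is the poset reflection of this preordered type. -/
def Om (A : S) := Σ X : S, X ⟶ A

/-- The weak-subobject preorder: `f ≤ g` iff `f` factors through `g`.
The poset reflection of this preorder is the fibre `Ψ(A)`. -/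
def wle {A : S} (f g : Om A) : Prop := ∃ k : f.1 ⟶ g.1, k ≫ g.2 = f.2

/-- Reindexing `Ψ_h`, computed by weak pullback along `h`. -/
noncomputable def wreindex (W : WeakPullbacks S) {A B : S} (h : B ⟶ A) (f : Om A) :
    Om B := ⟨W.obj f.2 h, W.snd f.2 h⟩

/-- Binary meet in the fibre, computed by weak pullback. -/
noncomputable def wmeet (W : WeakPullbacks S) {A : S} (f g : Om A) : Om A :=
  ⟨W.obj f.2 g.2, W.fst f.2 g.2 ≫ f.2⟩

/-- The left adjoint `∃_h`, computed by post-composition. -/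
def wpush {A B : S} (h : A ⟶ B) (f : Om A) : Om B := ⟨f.1, f.2 ≫ h⟩

variable [HasBinaryProducts S]

/-- A `Ψ`-equivalence relation on `A` (reflexive, symmetric, transitive),
stated on representatives. -/
noncomputable def OmEqRel (W : WeakPullbacks S) {A : S} (ρ : Om (A ⨯ A)) : Prop :=
  wle ⟨A, diag A⟩ ρ ∧
  wle ρ (wreindex W (prod.lift prod.snd prod.fst) ρ) ∧
  wle (wmeet W (wreindex W (prod.fst : (A ⨯ A) ⨯ A ⟶ A ⨯ A) ρ)
        (wreindex W (prod.lift (prod.fst ≫ prod.snd) prod.snd) ρ))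
      (wreindex W (prod.lift (prod.fst ≫ prod.fst) prod.snd) ρ)

/-- Conditions (ii)–(v) for arrows `φ : (A,ρ) → (B,σ)` of `E_Ψ`. -/
noncomputable def OmIsArrow (W : WeakPullbacks S) {A B : S}
    (ρ : Om (A ⨯ A)) (σ : Om (B ⨯ B)) (φ : Om (A ⨯ B)) : Prop :=
  wle (wmeet W (wreindex W (prod.fst : (A ⨯ A) ⨯ B ⟶ A ⨯ A) ρ)
        (wreindex W (prod.lift (prod.fst ≫ prod.snd) prod.snd) φ))
      (wreindex W (prod.lift (prod.fst ≫ prod.fst) prod.snd) φ) ∧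
  wle (wmeet W (wreindex W (prod.fst : (A ⨯ B) ⨯ B ⟶ A ⨯ B) φ)
        (wreindex W (prod.lift (prod.fst ≫ prod.snd) prod.snd) σ))
      (wreindex W (prod.lift (prod.fst ≫ prod.fst) prod.snd) φ) ∧
  wle (wmeet W (wreindex W (prod.fst : (A ⨯ B) ⨯ B ⟶ A ⨯ B) φ)
        (wreindex W (prod.lift (prod.fst ≫ prod.fst) prod.snd) φ))
      (wreindex W (prod.lift (prod.fst ≫ prod.snd) prod.snd) σ) ∧
  wle ⟨A, 𝟙 A⟩ (wpush prod.fst φ)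

/-- The graph relation `L[f]`, stated on representatives. -/
noncomputable def OmLrel (W : WeakPullbacks S) {A B : S} (f : A ⟶ B)
    (ρ : Om (A ⨯ A)) (σ : Om (B ⨯ B)) : Om (A ⨯ B) :=
  wpush (prod.lift (prod.fst ≫ prod.fst) prod.snd)
    (wmeet W (wreindex W (prod.fst : (A ⨯ A) ⨯ B ⟶ A ⨯ A) ρ)
      (wreindex W (prod.lift (prod.fst ≫ prod.snd ≫ f) prod.snd) σ))

/-! Work with generalized elements: `x : V ⟶ A` lies in `α = [g : X → A]` when it factors
through `g`. Reindexing, meets and `∃` are then computed pointwise, and `α ≤ β` as soon as every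
element of `α` lies in `β`, since `g` itself is an element of `α`.

For the rule of choice, `𝟙 A ∈ ∃_{pr₁} α` provides `k : A ⟶ X` with `k ≫ g ≫ pr₁ = 𝟙`, and
`w := k ≫ g ≫ pr₂` gives `⟨𝟙, w⟩ = k ≫ g ∈ α`. Applied to the totality of a functional relation
`φ : (A, ρ) → (B, σ)`, it yields `f : A ⟶ B` with `φ(a, f a)` for all `a`; the compatibility of
`φ` with `ρ` and `σ` and its single-valuedness up to `σ` then show `φ = L[f]`. -/

section Elements

variable {C : Type*} [Category C]

def OmMem {V A : C} (x : V ⟶ A) (α : Om A) : Prop := wle ⟨V, x⟩ α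

theorem omMem_self {A : C} (α : Om A) : OmMem α.2 α := ⟨𝟙 _, Category.id_comp _⟩

theorem OmMem.comp {U V A : C} {x : V ⟶ A} {α : Om A} (h : OmMem x α) (g : U ⟶ V) :
    OmMem (g ≫ x) α := by
  obtain ⟨p, hp⟩ := h
  exact ⟨g ≫ p, by simp [hp]⟩

theorem OmMem.of_wle {V A : C} {x : V ⟶ A} {α β : Om A} (hx : OmMem x α) (h : wle α β) :
    OmMem x β := by
  obtain ⟨p, hp⟩ := hx
  obtain ⟨k, hk⟩ := h
  exact ⟨p ≫ k, by simp [hk, hp]⟩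

theorem wle_iff_forall_omMem {A : C} {α β : Om A} :
    wle α β ↔ ∀ (V : C) (x : V ⟶ A), OmMem x α → OmMem x β :=
  ⟨fun h _ _ hx => hx.of_wle h, fun h => h _ _ (omMem_self α)⟩

theorem omMem_wreindex_iff (W : WeakPullbacks C) {V A B : C} {x : V ⟶ B} {h : B ⟶ A}
    {α : Om A} : OmMem x (wreindex W h α) ↔ OmMem (x ≫ h) α := by
  simp only [OmMem, wle, wreindex]
  constructor
  · rintro ⟨p, rfl⟩
    exact ⟨p ≫ W.fst α.2 h, by simp [W.comm]⟩
  · rintro ⟨p, hp⟩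
    exact ⟨W.lift p x hp, W.lift_snd p x hp⟩

theorem omMem_wmeet_iff (W : WeakPullbacks C) {V A : C} {x : V ⟶ A} {α β : Om A} :
    OmMem x (wmeet W α β) ↔ OmMem x α ∧ OmMem x β := by
  simp only [OmMem, wle, wmeet]
  constructor
  · rintro ⟨p, rfl⟩
    exact ⟨⟨p ≫ W.fst α.2 β.2, by simp⟩, ⟨p ≫ W.snd α.2 β.2, by simp [W.comm]⟩⟩
  · rintro ⟨⟨p, hp⟩, ⟨q, hq⟩⟩
    exact ⟨W.lift p q (hp.trans hq.symm), by rw [← Category.assoc, W.lift_fst, hp]⟩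

theorem omMem_wpush_iff {V A B : C} {x : V ⟶ B} {h : A ⟶ B} {α : Om A} :
    OmMem x (wpush h α) ↔ ∃ y : V ⟶ A, OmMem y α ∧ y ≫ h = x := by
  simp only [OmMem, wle, wpush]
  constructor
  · rintro ⟨p, rfl⟩
    exact ⟨p ≫ α.2, ⟨p, rfl⟩, by simp⟩
  · rintro ⟨_, ⟨p, rfl⟩, rfl⟩
    exact ⟨p, by simp⟩

theorem omMem_comp_of_wle_wmeet_wreindex (W : WeakPullbacks C) {V T P Q R : C}
    {β : Om P} {γ : Om Q} {δ : Om R} {a : T ⟶ P} {b : T ⟶ Q} {c : T ⟶ R}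
    (H : wle (wmeet W (wreindex W a β) (wreindex W b γ)) (wreindex W c δ)) {t : V ⟶ T}
    (ha : OmMem (t ≫ a) β) (hb : OmMem (t ≫ b) γ) : OmMem (t ≫ c) δ := by
  rw [← omMem_wreindex_iff W]
  refine OmMem.of_wle ?_ H
  rw [omMem_wmeet_iff, omMem_wreindex_iff, omMem_wreindex_iff]
  exact ⟨ha, hb⟩

end Elements

attribute [local simp] prod.lift_fst prod.lift_snd prod.lift_fst_assoc prod.lift_snd_assoc

theorem exists_wle_wreindex_lift_of_wle_wpush_fst (W : WeakPullbacks S) {A B : S}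
    {α : Om (A ⨯ B)} (h : wle ⟨A, 𝟙 A⟩ (wpush prod.fst α)) :
    ∃ w : A ⟶ B, wle ⟨A, 𝟙 A⟩ (wreindex W (prod.lift (𝟙 A) w) α) := by
  obtain ⟨y, hy, hy_fst⟩ := (omMem_wpush_iff (x := 𝟙 A)).1 h
  refine ⟨y ≫ prod.snd, (omMem_wreindex_iff W).2 ?_⟩
  have hy_eq : 𝟙 A ≫ prod.lift (𝟙 A) (y ≫ prod.snd) = y :=
    prod.hom_ext (by simp [hy_fst]) (by simp)
  rwa [hy_eq]

section Relations

def OmRelates {V A B : S} (ρ : Om (A ⨯ B)) (a : V ⟶ A) (b : V ⟶ B) : Prop :=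
  OmMem (prod.lift a b) ρ

theorem wle_of_forall_omRelates {A B : S} {ρ ρ' : Om (A ⨯ B)}
    (h : ∀ (V : S) (a : V ⟶ A) (b : V ⟶ B), OmRelates ρ a b → OmRelates ρ' a b) :
    wle ρ ρ' := by
  refine wle_iff_forall_omMem.2 fun V x hx => ?_
  have hx_eq : prod.lift (x ≫ prod.fst) (x ≫ prod.snd) = x := prod.hom_ext (by simp) (by simp)
  rw [← hx_eq] at hx ⊢
  exact h V _ _ hx

variable {W : WeakPullbacks S}

theorem OmEqRel.omRelates_refl {A V : S} {ρ : Om (A ⨯ A)} (hρ : OmEqRel W ρ) (a : V ⟶ A) :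
    OmRelates ρ a a := by
  have h : OmMem (diag A) ρ := hρ.1
  simpa [OmRelates] using h.comp a

variable {A B : S} {ρ : Om (A ⨯ A)} {σ : Om (B ⨯ B)} {φ : Om (A ⨯ B)}

theorem OmIsArrow.omRelates_left_trans (hφ : OmIsArrow W ρ σ φ) {V : S} {a a' : V ⟶ A}
    {b : V ⟶ B} (hρ : OmRelates ρ a a') (hφb : OmRelates φ a' b) : OmRelates φ a b := by
  simpa [OmRelates] using omMem_comp_of_wle_wmeet_wreindex W hφ.1
    (t := prod.lift (prod.lift a a') b) (by simpa [OmRelates] using hρ)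
    (by simpa [OmRelates] using hφb)

theorem OmIsArrow.omRelates_right_trans (hφ : OmIsArrow W ρ σ φ) {V : S} {a : V ⟶ A}
    {b b' : V ⟶ B} (hφb : OmRelates φ a b) (hσ : OmRelates σ b b') : OmRelates φ a b' := by
  simpa [OmRelates] using omMem_comp_of_wle_wmeet_wreindex W hφ.2.1
    (t := prod.lift (prod.lift a b) b') (by simpa [OmRelates] using hφb)
    (by simpa [OmRelates] using hσ)

theorem OmIsArrow.omRelates_unique (hφ : OmIsArrow W ρ σ φ) {V : S} {a : V ⟶ A}
    {b b' : V ⟶ B} (hb : OmRelates φ a b) (hb' : OmRelates φ a b') : OmRelates σ b b' := by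
  simpa [OmRelates] using omMem_comp_of_wle_wmeet_wreindex W hφ.2.2.1
    (t := prod.lift (prod.lift a b) b') (by simpa [OmRelates] using hb)
    (by simpa [OmRelates] using hb')

theorem OmIsArrow.exists_omRelates_comp (hφ : OmIsArrow W ρ σ φ) :
    ∃ f : A ⟶ B, ∀ (V : S) (a : V ⟶ A), OmRelates φ a (a ≫ f) := by
  obtain ⟨f, hf⟩ := exists_wle_wreindex_lift_of_wle_wpush_fst W hφ.2.2.2
  have hf : OmMem (prod.lift (𝟙 A) f) φ := by simpa using (omMem_wreindex_iff W).1 hf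
  exact ⟨f, fun V a => by simpa [OmRelates] using hf.comp a⟩

theorem omRelates_omLrel_iff {f : A ⟶ B} {V : S} {a : V ⟶ A} {b : V ⟶ B} :
    OmRelates (OmLrel W f ρ σ) a b ↔
      ∃ a' : V ⟶ A, OmRelates ρ a a' ∧ OmRelates σ (a' ≫ f) b := by
  simp only [OmRelates, OmLrel, omMem_wpush_iff, omMem_wmeet_iff, omMem_wreindex_iff]
  constructor
  · rintro ⟨y, ⟨hρ, hσ⟩, hy⟩
    have ha : y ≫ prod.fst ≫ prod.fst = a := by simpa using congrArg (· ≫ prod.fst) hy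
    have hb : y ≫ prod.snd = b := by simpa using congrArg (· ≫ prod.snd) hy
    refine ⟨y ≫ prod.fst ≫ prod.snd, ?_, ?_⟩
    · convert hρ using 1
      exact prod.hom_ext (by simp [ha]) (by simp)
    · convert hσ using 1
      exact prod.hom_ext (by simp) (by simp [hb])
  · rintro ⟨a', hρ, hσ⟩
    exact ⟨prod.lift (prod.lift a a') b, ⟨by simpa using hρ, by simpa using hσ⟩, by simp⟩

variable {f : A ⟶ B} (hφ : OmIsArrow W ρ σ φ)
  (hf : ∀ (V : S) (a : V ⟶ A), OmRelates φ a (a ≫ f))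
include hφ hf

theorem OmIsArrow.wle_wreindex_prodMap : wle ρ (wreindex W (prod.map f f) σ) := by
  refine wle_of_forall_omRelates fun V a a' h => ?_
  rw [OmRelates, omMem_wreindex_iff, prod.lift_map]
  exact hφ.omRelates_unique (hf V a) (hφ.omRelates_left_trans h (hf V a'))

theorem OmIsArrow.omLrel_wle : wle (OmLrel W f ρ σ) φ := by
  refine wle_of_forall_omRelates fun V a b hab => ?_
  obtain ⟨a', hρ, hσ⟩ := omRelates_omLrel_iff.1 hab
  exact hφ.omRelates_right_trans (hφ.omRelates_left_trans hρ (hf V a')) hσ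

theorem OmIsArrow.wle_omLrel (hρ : OmEqRel W ρ) : wle φ (OmLrel W f ρ σ) := by
  refine wle_of_forall_omRelates fun V a b hab => ?_
  exact omRelates_omLrel_iff.2 ⟨a, hρ.omRelates_refl a, hφ.omRelates_unique (hf V a) hab⟩

end Relations

/-- the weak-subobjects doctrine `Ψ` of a cartesian category
with weak pullbacks has weak full comprehensions and satisfies the rule of
choice; consequently the canonical functor `L : Q_Ψ → E_Ψ` is full (every
functional relation between `Ψ`-equivalence relations is, up to the poset
reflection, the graph `L[f]` of some map `f`). -/
theorem weak_subobjects_choice_and_L_full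
    (S : Type u) [Category.{v} S] [HasBinaryProducts S] (W : WeakPullbacks S) :
    -- weak comprehension of `α = [g : X → A]` is `g` itself
    (∀ (A : S) (α : Om A), wle ⟨α.1, 𝟙 α.1⟩ (wreindex W α.2 α)) ∧
    (∀ (A : S) (α : Om A) (Z : S) (f : Z ⟶ A),
      wle ⟨Z, 𝟙 Z⟩ (wreindex W f α) → ∃ h : Z ⟶ α.1, h ≫ α.2 = f) ∧
    -- weak comprehensions are full
    (∀ (A : S) (α β : Om A), (∃ h : α.1 ⟶ β.1, h ≫ β.2 = α.2) → wle α β) ∧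
    -- rule of choice
    (∀ (A B : S) (α : Om (A ⨯ B)), wle ⟨A, 𝟙 A⟩ (wpush prod.fst α) →
      ∃ w : A ⟶ B, wle ⟨A, 𝟙 A⟩ (wreindex W (prod.lift (𝟙 A) w) α)) ∧
    -- consequently `L : Q_Ψ → E_Ψ` is full
    (∀ (A B : S) (ρ : Om (A ⨯ A)) (σ : Om (B ⨯ B)),
      OmEqRel W ρ → OmEqRel W σ →
      ∀ φ : Om (A ⨯ B), OmIsArrow W ρ σ φ →
      ∃ f : A ⟶ B,
        wle ρ (wreindex W (prod.map f f) σ) ∧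
        wle (OmLrel W f ρ σ) φ ∧ wle φ (OmLrel W f ρ σ)) := by
  refine ⟨fun A α => (omMem_wreindex_iff W).2 ((omMem_self α).comp (𝟙 _)),
    fun A α Z f h => by simpa [OmMem, wle] using (omMem_wreindex_iff W).1 h,
    fun A α β h => h, fun A B α => exists_wle_wreindex_lift_of_wle_wpush_fst W, ?_⟩
  intro A B ρ σ hρ _ φ hφ
  obtain ⟨f, hf⟩ := hφ.exists_omRelates_comp
  exact ⟨f, hφ.wle_wreindex_prodMap hf, hφ.omLrel_wle hf, hφ.wle_omLrel hf hρ⟩
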